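/- Let Φ denote the standard normal CDF. For every α ∈ (0, 0.25) and every ψ ∈ [1/2, 0.9], writing c̄ = Φ^{-1}(1 − ψα) and c̃ = Φ^{-1}(1 − α + Φ(−c̄)), one has c̃ < 2c̄ + Φ^{-1}(1 − α/2). (Equivalently, the critical value ψ_1 at which c̃ = 2c̄ + Φ^{-1}(1 − α/2) satisfies ψ_1 > 0.9 for all α ∈ (0, 0.25).) -/

import Mathlib

/-!
Write `a = Φ⁻¹(1 - ψα)` and `b = Φ⁻¹(1 - α/2)`. Since `Φ(-a) = ψα`, the claim is
`1 - Φ(b + 2a) < (1 - ψ)α`, and `1 - ψ ≥ 1/10`. The Gaussian density satisfies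
`φ(t + s) = exp(-s²/2 - st) φ(t)`, so
`1 - Φ(b + s) ≤ exp(-s²/2 - sb) (1 - Φ(b)) = exp(-s²/2 - sb) α/2`.
With `s = 2a` and `b ≥ a ≥ 2/3` (the latter because `ψα ≤ 0.225` and
`Φ(x) ≤ 1/2 + x/√(2π)`), the factor is at most `exp(-16/9) < 1/5`.
-/

open MeasureTheory ProbabilityTheory

/-- The standard normal cumulative distribution function `Φ`. -/
noncomputable def Phi : ℝ → ℝ := fun x => ProbabilityTheory.cdf (gaussianReal 0 1) x

/-- The inverse `Φ⁻¹` of the standard normal CDF (junk values off `(0,1)`). -/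
noncomputable def PhiInv : ℝ → ℝ := Function.invFun Phi

open Set Real

lemma continuous_gaussianPDFReal (μ : ℝ) (v : NNReal) : Continuous (gaussianPDFReal μ v) := by
  unfold gaussianPDFReal; fun_prop

lemma gaussianPDFReal_le (μ : ℝ) (v : NNReal) (x : ℝ) :
    gaussianPDFReal μ v x ≤ (√(2 * π * v))⁻¹ := by
  rw [gaussianPDFReal]
  refine mul_le_of_le_one_right (by positivity) (exp_le_one_iff.mpr ?_)
  exact div_nonpos_of_nonpos_of_nonneg (neg_nonpos.mpr (sq_nonneg _)) (by positivity)

local notation "φ" => gaussianPDFReal 0 1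

lemma integrable_φ : Integrable φ := integrable_gaussianPDFReal 0 1

lemma Phi_eq_setIntegral (x : ℝ) : Phi x = ∫ t in Iic x, φ t := by
  rw [Phi, cdf_eq_real, measureReal_def, gaussianReal_apply_eq_integral _ one_ne_zero,
    ENNReal.toReal_ofReal (integral_nonneg fun t => gaussianPDFReal_nonneg 0 1 t)]

lemma Phi_sub_Phi (x y : ℝ) : Phi y - Phi x = ∫ t in x..y, φ t := by
  rw [Phi_eq_setIntegral, Phi_eq_setIntegral,
    intervalIntegral.integral_Iic_sub_Iic integrable_φ.integrableOn integrable_φ.integrableOn]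

lemma hasDerivAt_Phi (x : ℝ) : HasDerivAt Phi (φ x) x := by
  have h : Phi = fun y => Phi 0 + ∫ t in 0..y, φ t := by
    funext y; rw [← Phi_sub_Phi, add_sub_cancel]
  rw [h]
  exact ((continuous_gaussianPDFReal 0 1).integral_hasStrictDerivAt 0 x).hasDerivAt.const_add _

lemma Phi_strictMono : StrictMono Phi :=
  strictMono_of_hasDerivAt_pos hasDerivAt_Phi fun x => gaussianPDFReal_pos 0 1 x one_ne_zero

lemma continuous_Phi : Continuous Phi :=
  continuous_iff_continuousAt.mpr fun x => (hasDerivAt_Phi x).continuousAt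

lemma one_sub_Phi (x : ℝ) : 1 - Phi x = ∫ t in Ioi x, φ t := by
  rw [Phi_eq_setIntegral, ← integral_gaussianPDFReal_eq_one 0 one_ne_zero, ← setIntegral_univ,
    ← Iic_union_Ioi (a := x), setIntegral_union (Iic_disjoint_Ioi le_rfl) measurableSet_Ioi
      integrable_φ.integrableOn integrable_φ.integrableOn, add_sub_cancel_left]

lemma Phi_neg (x : ℝ) : Phi (-x) = 1 - Phi x := by
  have φ_neg (t : ℝ) : φ (-t) = φ t := by simp [gaussianPDFReal]
  rw [Phi_eq_setIntegral, one_sub_Phi]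
  conv_rhs => rw [← neg_neg x, ← integral_comp_neg_Iic]
  simp only [φ_neg]

lemma Phi_zero : Phi 0 = 1 / 2 := by
  linarith [neg_zero (G := ℝ) ▸ Phi_neg 0]

lemma Phi_le_half_add {x : ℝ} (hx : 0 ≤ x) : Phi x ≤ 1 / 2 + x / √(2 * π) := by
  have h := image_sub_le_mul_sub_of_deriv_le (fun y => (hasDerivAt_Phi y).differentiableAt)
    (fun y => (hasDerivAt_Phi y).deriv ▸ gaussianPDFReal_le 0 1 y) hx
  rw [Phi_zero, NNReal.coe_one, mul_one, sub_zero, ← div_eq_inv_mul] at h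
  linarith

lemma one_sub_Phi_add_le (x : ℝ) {s : ℝ} (hs : 0 ≤ s) :
    1 - Phi (x + s) ≤ exp (-s ^ 2 / 2 - s * x) * (1 - Phi x) := by
  have hshift : ∫ t in Ioi (x + s), φ t = ∫ t in Ioi x, φ (t + s) := by
    have e : MeasurableEmbedding (· + s : ℝ → ℝ) :=
      (Homeomorph.addRight s).isClosedEmbedding.measurableEmbedding
    have h := e.setIntegral_map (μ := volume) φ (Ioi (x + s))
    rwa [map_add_right_eq_self, preimage_add_const_Ioi, add_sub_cancel_right] at h
  rw [one_sub_Phi, one_sub_Phi, hshift, ← integral_const_mul]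
  refine setIntegral_mono_on (integrable_φ.comp_add_right s).integrableOn
    (integrable_φ.const_mul _).integrableOn measurableSet_Ioi fun t ht => ?_
  have hφ : φ (t + s) = exp (-s ^ 2 / 2 - s * t) * φ t := by
    simp only [gaussianPDFReal, sub_zero, NNReal.coe_one, mul_one]
    rw [mul_left_comm, ← exp_add]
    ring_nf
  rw [hφ]
  exact mul_le_mul_of_nonneg_right (exp_le_exp.mpr (by nlinarith [ht.out]))
    (gaussianPDFReal_nonneg 0 1 t)

lemma Phi_PhiInv {p : ℝ} (hp : p ∈ Ioo 0 1) : Phi (PhiInv p) = p := by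
  refine Function.invFun_eq (mem_range_of_exists_le_of_exists_ge continuous_Phi ?_ ?_)
  · exact ((tendsto_cdf_atBot _).eventually_lt_const hp.1).exists.imp fun _ h => h.le
  · exact ((tendsto_cdf_atTop _).eventually_const_lt hp.2).exists.imp fun _ h => h.le

lemma PhiInv_lt_iff {p : ℝ} (hp : p ∈ Ioo 0 1) {y : ℝ} : PhiInv p < y ↔ p < Phi y := by
  rw [← Phi_strictMono.lt_iff_lt, Phi_PhiInv hp]

lemma le_PhiInv_iff {p : ℝ} (hp : p ∈ Ioo 0 1) {y : ℝ} : y ≤ PhiInv p ↔ Phi y ≤ p := by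
  rw [← Phi_strictMono.le_iff_le, Phi_PhiInv hp]

lemma two_div_three_le_PhiInv {p : ℝ} (hp : p ∈ Ioo 0 1) (h : 23 / 30 ≤ p) :
    2 / 3 ≤ PhiInv p := by
  have hsqrt : 5 / 2 ≤ √(2 * π) :=
    (le_sqrt (by norm_num) (by positivity)).mpr (by nlinarith [pi_gt_d2])
  rw [le_PhiInv_iff hp]
  calc Phi (2 / 3) ≤ 1 / 2 + 2 / 3 / √(2 * π) := Phi_le_half_add (by norm_num)
    _ ≤ 1 / 2 + 2 / 3 / (5 / 2) := by gcongr
    _ = 23 / 30 := by norm_num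
    _ ≤ p := h

lemma exp_neg_sixteen_div_nine_lt : exp (-(16 / 9)) < 1 / 5 := by
  have h : (5 : ℝ) < exp (16 / 9) := by
    refine lt_of_lt_of_le ?_ (sum_le_exp_of_nonneg (by norm_num) 4)
    norm_num [Finset.sum_range_succ, Nat.factorial]
  rw [exp_neg, one_div]
  exact inv_strictAnti₀ (by norm_num) h

theorem ctil_lt_two_cbar_add_chalf (α ψ : ℝ)
    (hα : 0 < α) (hα' : α < 0.25) (hψ : 1/2 ≤ ψ) (hψ' : ψ ≤ 0.9) :
    PhiInv (1 - α + Phi (-PhiInv (1 - ψ * α))) <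
      2 * PhiInv (1 - ψ * α) + PhiInv (1 - α / 2) := by
  have hψα : 0 < ψ * α ∧ ψ * α ≤ 0.225 := ⟨by positivity, by nlinarith⟩
  have hpa : 1 - ψ * α ∈ Ioo 0 1 := ⟨by linarith, by linarith⟩
  have hpb : 1 - α / 2 ∈ Ioo 0 1 := ⟨by linarith, by linarith⟩
  set a := PhiInv (1 - ψ * α)
  set b := PhiInv (1 - α / 2)
  have ha : 2 / 3 ≤ a := two_div_three_le_PhiInv hpa (by linarith)
  have hab : a ≤ b := by
    rw [le_PhiInv_iff hpb, Phi_PhiInv hpa]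
    nlinarith
  have hexp : exp (-(2 * a) ^ 2 / 2 - 2 * a * b) < 1 / 5 :=
    (exp_le_exp.mpr (by nlinarith)).trans_lt exp_neg_sixteen_div_nine_lt
  have htail : 1 - Phi (b + 2 * a) < α / 10 := by
    calc 1 - Phi (b + 2 * a) ≤ exp (-(2 * a) ^ 2 / 2 - 2 * a * b) * (1 - Phi b) :=
          one_sub_Phi_add_le b (by linarith)
      _ < 1 / 5 * (α / 2) := by
        rw [Phi_PhiInv hpb, sub_sub_cancel]; exact mul_lt_mul_of_pos_right hexp (by positivity)
      _ = α / 10 := by ring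
  rw [Phi_neg, Phi_PhiInv hpa, PhiInv_lt_iff ⟨by nlinarith, by nlinarith⟩, add_comm (2 * a)]
  nlinarith
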